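/- arXiv:1907.04561 — 2 statements merged into one kernel-verified Lean document; each statement's English description precedes it below -/
import Mathlib

section
/- Let d ≥ 2 and let u_1, …, u_n ∈ ℝ^d be vectors such that u_1, …, u_{n−1} span ℝ^d and u_n = (0,0,…,0,1). Let Ω_n and Ω_{n−1} be the origin-symmetric zonotopes generated by u_1,…,u_n and by u_1,…,u_{n−1}, respectively. Then there exists a cylindric set Σ_n ⊂ ℝ^d whose base Π_n is a zonotope in ℝ^{d−1} with nonempty interior, such that: (i) every function F ∈ PW(Ω_n) can be represented as F(x,y) = G(x,y) + H(x,y)·sin(πy) for all (x,y) ∈ ℝ^{d−1} × ℝ, for some G ∈ PW(Σ_n) and some H ∈ PW(Ω_{n−1}); and (ii) conversely, for any G ∈ PW(Σ_n) and H ∈ PW(Ω_{n−1}), the function F defined by F(x,y) = G(x,y) + H(x,y)·sin(πy) belongs to PW(Ω_n). -/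
open MeasureTheory Complex
open scoped RealInnerProductSpace Pointwise

noncomputable section

/-- The origin-symmetric zonotope generated by the vectors `u 1, …, u n`. -/
def zonotope {V : Type*} [AddCommGroup V] [Module ℝ V] {n : ℕ} (u : Fin n → V) : Set V :=
  {x | ∃ t : Fin n → ℝ, (∀ j, t j ∈ Set.Icc (-(1/2) : ℝ) (1/2)) ∧ x = ∑ j, t j • u j}

/-- A set is a zonotope if it is the Minkowski sum of finitely many line segments. -/
def IsZonotope {V : Type*} [AddCommGroup V] [Module ℝ V] (A : Set V) : Prop :=
  ∃ (k : ℕ) (a b : Fin k → V),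
    A = {x | ∃ p : Fin k → V, (∀ j, p j ∈ segment ℝ (a j) (b j)) ∧ x = ∑ j, p j}

/-- A cylindric set `S ⊆ ℝ^{m} × ℝ` with base `B ⊆ ℝ^{m}`: over every point of the
bounded measurable base `B`, the fiber of `S` is an interval `[φ x, φ x + 1]` of length one,
where `φ` is a bounded measurable function on `B`. -/
def IsCylindric {m : ℕ} (S : Set (EuclideanSpace ℝ (Fin m) × ℝ))
    (B : Set (EuclideanSpace ℝ (Fin m))) : Prop :=
  Bornology.IsBounded S ∧ MeasurableSet S ∧ Bornology.IsBounded B ∧ MeasurableSet B ∧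
    ∃ φ : EuclideanSpace ℝ (Fin m) → ℝ, Measurable φ ∧ (∃ C : ℝ, ∀ x ∈ B, |φ x| ≤ C) ∧
      S = {p | p.1 ∈ B ∧ φ p.1 ≤ p.2 ∧ p.2 ≤ φ p.1 + 1}

/-- The Paley–Wiener space of a set `Ω ⊆ ℝ^{m} × ℝ`. -/
def PWprod {m : ℕ} (Ω : Set (EuclideanSpace ℝ (Fin m) × ℝ)) :
    Set (EuclideanSpace ℝ (Fin m) × ℝ → ℂ) :=
  {F | ∃ f : EuclideanSpace ℝ (Fin m) × ℝ → ℂ, MemLp f 2 (volume.restrict Ω) ∧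
    ∀ t, F t = ∫ p in Ω,
      f p * Complex.exp (-(2 * Real.pi * Complex.I * (((⟪ t.1, p.1 ⟫ : ℝ) + t.2 * p.2 : ℝ) : ℂ)))}

/-!
Write `Ω_n = Ω_{n-1} + [-e/2, e/2]` with `e = (0, 1)`. On the Fourier side, multiplication by
`sin (π y)` is the central difference `Δh = (2i)⁻¹ (h (· + e/2) - h (· - e/2))`, which maps
functions supported on `Ω_{n-1}` to functions supported on `Ω_n`; since the unit slab `Σ_n` at the
bottom of `Ω_n` lies in `Ω_n`, this gives (ii). For (i), given `f` supported on `Ω_n`, the finite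
stair sum `h = -2i ∑_k f (· + (k + 1/2) e)`, cut down to `Ω_{n-1}`, is a discrete antiderivative:
on each vertical fibre `[a - 1/2, b + 1/2]` of `Ω_n` the difference `f - Δh` vanishes outside the
bottom interval `[a - 1/2, a + 1/2]`, that is, outside `Σ_n`.
-/

open Set FourierTransform VectorFourier

section Zonotope

variable {V : Type*} [AddCommGroup V] [Module ℝ V] {n : ℕ}

lemma zonotope_eq_image (u : Fin n → V) :
    zonotope u = Fintype.linearCombination ℝ u '' univ.pi fun _ => Icc (-(1/2)) (1/2) := by
  ext x
  simp only [zonotope, Fintype.linearCombination_apply, mem_image, mem_univ_pi]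
  exact ⟨fun ⟨t, ht, hx⟩ => ⟨t, ht, hx.symm⟩, fun ⟨t, ht, hx⟩ => ⟨t, ht, hx.symm⟩⟩

lemma convex_zonotope (u : Fin n → V) : Convex ℝ (zonotope u) := by
  rw [zonotope_eq_image]
  exact (convex_pi fun _ _ => convex_Icc _ _).linear_image _

lemma image_zonotope {V' : Type*} [AddCommGroup V'] [Module ℝ V'] (L : V →ₗ[ℝ] V')
    (u : Fin n → V) : L '' zonotope u = zonotope (L ∘ u) := by
  rw [zonotope_eq_image, zonotope_eq_image, image_image]
  congr! 2 with t
  simp [Fintype.linearCombination_apply, map_sum]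

lemma isZonotope_zonotope (u : Fin n → V) : IsZonotope (zonotope u) := by
  refine ⟨n, fun j => (-(1/2) : ℝ) • u j, fun j => (1/2 : ℝ) • u j, ?_⟩
  ext x
  constructor
  · rintro ⟨t, ht, rfl⟩
    refine ⟨fun j => t j • u j, fun j => ?_, rfl⟩
    refine ⟨1/2 - t j, 1/2 + t j, by linarith [(ht j).2], by linarith [(ht j).1], by ring, ?_⟩
    rw [smul_smul, smul_smul, ← add_smul]
    congr 1
    ring
  · rintro ⟨p, hp, rfl⟩
    choose a b ha hb hab heq using hp
    refine ⟨fun j => (b j - a j) / 2, fun j => ⟨?_, ?_⟩, Finset.sum_congr rfl fun j _ => ?_⟩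
    · linarith [ha j, hb j, hab j]
    · linarith [ha j, hb j, hab j]
    · rw [← heq j, smul_smul, smul_smul, ← add_smul]
      congr 1
      ring

lemma zonotope_succ (u : Fin (n + 1) → V) :
    zonotope u = zonotope (fun j : Fin n => u j.castSucc) +
      (fun s : ℝ => s • u (Fin.last n)) '' Icc (-(1/2)) (1/2) := by
  ext p
  rw [mem_add]
  constructor
  · rintro ⟨t, ht, rfl⟩
    exact ⟨_, ⟨fun j => t j.castSucc, fun j => ht _, rfl⟩, _, ⟨t (Fin.last n), ht _, rfl⟩,
      (Fin.sum_univ_castSucc fun j => t j • u j).symm⟩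
  · rintro ⟨_, ⟨t, ht, rfl⟩, _, ⟨s, hs, rfl⟩, rfl⟩
    refine ⟨Fin.snoc t s, Fin.lastCases (by simpa using hs) (by simpa using ht), ?_⟩
    simp [Fin.sum_univ_castSucc]

lemma span_range_comp_eq_top {V' : Type*} [AddCommGroup V'] [Module ℝ V'] {L : V →ₗ[ℝ] V'}
    (hL : Function.Surjective L) {u : Fin n → V} (hspan : Submodule.span ℝ (range u) = ⊤) :
    Submodule.span ℝ (range (L ∘ u)) = ⊤ := by
  rw [range_comp, Submodule.span_image, hspan, Submodule.map_top, LinearMap.range_eq_top.2 hL]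

variable [TopologicalSpace V] [IsTopologicalAddGroup V] [ContinuousSMul ℝ V]

lemma isCompact_zonotope (u : Fin n → V) : IsCompact (zonotope u) := by
  rw [zonotope_eq_image]
  exact (isCompact_univ_pi fun _ => isCompact_Icc).image
    (Fintype.linearCombination ℝ u).continuous_of_finiteDimensional

end Zonotope

lemma interior_zonotope_nonempty {V : Type*} [NormedAddCommGroup V] [NormedSpace ℝ V]
    [FiniteDimensional ℝ V] {n : ℕ} {u : Fin n → V}
    (hspan : Submodule.span ℝ (range u) = ⊤) : (interior (zonotope u)).Nonempty := by
  have h0 : (0 : V) ∈ zonotope u := ⟨0, fun _ => by norm_num, by simp⟩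
  rw [(convex_zonotope u).interior_nonempty_iff_affineSpan_eq_top,
    AffineSubspace.affineSpan_eq_top_iff_vectorSpan_eq_top_of_nonempty ℝ V V ⟨0, h0⟩,
    vectorSpan_eq_span_vsub_set_right ℝ h0, eq_top_iff, ← hspan, Submodule.span_le]
  rintro _ ⟨j, rfl⟩
  have hj : (1/2 : ℝ) • u j ∈ zonotope u :=
    ⟨Pi.single j (1/2), fun i => by by_cases h : i = j <;> simp [h], by simp⟩
  have := Submodule.smul_mem _ (2 : ℝ) (Submodule.subset_span ⟨_, hj, rfl⟩ :
    (1/2 : ℝ) • u j -ᵥ 0 ∈ Submodule.span ℝ ((fun x => x -ᵥ (0 : V)) '' zonotope u))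
  simpa [smul_smul] using this

section Fiber

variable {W : Type*} {Z : Set (W × ℝ)}

lemma fiber_subset_image_snd (Z : Set (W × ℝ)) (x : W) : Prod.mk x ⁻¹' Z ⊆ Prod.snd '' Z :=
  fun _ hy => ⟨_, hy, rfl⟩

lemma fiber_nonempty {x : W} (hx : x ∈ Prod.fst '' Z) : (Prod.mk x ⁻¹' Z).Nonempty := by
  obtain ⟨⟨_, y⟩, hy, rfl⟩ := hx
  exact ⟨y, hy⟩

def lowerBoundary (Z : Set (W × ℝ)) (x : W) : ℝ := sInf (Prod.mk x ⁻¹' Z)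

def lowerSlab (Z : Set (W × ℝ)) : Set (W × ℝ) :=
  {p | p.1 ∈ Prod.fst '' Z ∧ lowerBoundary Z p.1 - 1/2 ≤ p.2 ∧ p.2 ≤ lowerBoundary Z p.1 + 1/2}

variable [TopologicalSpace W]

lemma isCompact_fiber [T2Space W] (hZ : IsCompact Z) (x : W) : IsCompact (Prod.mk x ⁻¹' Z) :=
  (hZ.image continuous_snd).of_isClosed_subset
    (hZ.isClosed.preimage (Continuous.prodMk_right x)) (fiber_subset_image_snd Z x)

lemma exists_forall_abs_snd_le (hZ : IsCompact Z) : ∃ C, ∀ q ∈ Z, |q.2| ≤ C :=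
  let ⟨C, hC⟩ := (hZ.image continuous_snd).isBounded.exists_norm_le
  ⟨C, fun q hq => hC _ ⟨q, hq, rfl⟩⟩

lemma lowerBoundary_le (hZ : IsCompact Z) {x : W} {y : ℝ} (h : (x, y) ∈ Z) :
    lowerBoundary Z x ≤ y :=
  csInf_le ((hZ.image continuous_snd).bddBelow.mono (fiber_subset_image_snd Z x)) h

variable [T2Space W]

lemma mk_lowerBoundary_mem (hZ : IsCompact Z) {x : W} (hx : x ∈ Prod.fst '' Z) :
    (x, lowerBoundary Z x) ∈ Z :=
  (isCompact_fiber hZ x).sInf_mem (fiber_nonempty hx)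

lemma fiber_eq_Icc [AddCommGroup W] [Module ℝ W] (hZ : IsCompact Z) (hZc : Convex ℝ Z) {x : W}
    (hx : x ∈ Prod.fst '' Z) :
    Prod.mk x ⁻¹' Z = Icc (lowerBoundary Z x) (sSup (Prod.mk x ⁻¹' Z)) := by
  have hconv : Convex ℝ (Prod.mk x ⁻¹' Z) := fun y hy y' hy' a b ha hb hab => by
    simpa [← add_smul, hab] using hZc hy hy' ha hb hab
  exact eq_Icc_of_connected_compact (hconv.isConnected (fiber_nonempty hx)) (isCompact_fiber hZ x)

lemma measurable_lowerBoundary [MeasurableSpace W] [OpensMeasurableSpace W] (hZ : IsCompact Z) :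
    Measurable (lowerBoundary Z) := by
  refine measurable_of_Iic fun r => ?_
  -- over points with an empty fibre the value is the junk `sInf ∅ = 0`
  have hpre : lowerBoundary Z ⁻¹' Iic r =
      Prod.fst '' (Z ∩ {p | p.2 ≤ r}) ∪ (Prod.fst '' Z)ᶜ ∩ {_x | 0 ≤ r} := by
    ext x
    by_cases hx : x ∈ Prod.fst '' Z
    · simp only [mem_preimage, mem_Iic, mem_union, mem_image, mem_inter_iff, hx,
        not_true_eq_false, mem_compl_iff, false_and, or_false]
      constructor
      · exact fun h => ⟨_, ⟨mk_lowerBoundary_mem hZ hx, h⟩, rfl⟩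
      · rintro ⟨⟨_, y⟩, ⟨hy, hyr⟩, rfl⟩
        exact (lowerBoundary_le hZ hy).trans hyr
    · have hempty : Prod.mk x ⁻¹' Z = ∅ :=
        eq_empty_iff_forall_notMem.2 fun y hy => hx ⟨_, hy, rfl⟩
      have hx' : x ∉ Prod.fst '' (Z ∩ {p | p.2 ≤ r}) :=
        fun h => hx (image_mono inter_subset_left h)
      simp only [mem_preimage, mem_Iic, mem_union, mem_inter_iff, mem_compl_iff, hx, hx',
        not_false_eq_true, true_and, false_or, mem_ofPred_eq, lowerBoundary, hempty,
        Real.sInf_empty]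
  rw [hpre]
  exact ((hZ.inter_right (isClosed_le continuous_snd continuous_const)).image
    continuous_fst).isClosed.measurableSet.union
    ((hZ.image continuous_fst).isClosed.measurableSet.compl.inter (MeasurableSet.const _))

lemma measurableSet_lowerSlab [MeasurableSpace W] [OpensMeasurableSpace W] (hZ : IsCompact Z) :
    MeasurableSet (lowerSlab Z) := by
  have hb : Measurable fun p : W × ℝ => lowerBoundary Z p.1 :=
    (measurable_lowerBoundary hZ).comp measurable_fst
  exact ((hZ.image continuous_fst).isClosed.measurableSet.preimage measurable_fst).inter
    ((measurableSet_le (hb.sub_const _) measurable_snd).inter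
      (measurableSet_le measurable_snd (hb.add_const _)))

end Fiber

section Thickening

variable {W : Type*} [AddCommGroup W] {Z : Set (W × ℝ)}

def verticalThickening (Z : Set (W × ℝ)) : Set (W × ℝ) := Z + {0} ×ˢ Icc (-(1/2)) (1/2)

lemma mk_mem_verticalThickening_iff {x : W} {y : ℝ} :
    (x, y) ∈ verticalThickening Z ↔ ∃ z ∈ Icc (y - 1/2) (y + 1/2), (x, z) ∈ Z := by
  constructor
  · rintro ⟨⟨x', z⟩, hz, ⟨_, s⟩, ⟨rfl, hs⟩, h⟩
    obtain ⟨rfl, rfl⟩ := Prod.mk.inj (by simpa using h)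
    exact ⟨z, ⟨by linarith [hs.2], by linarith [hs.1]⟩, hz⟩
  · rintro ⟨z, hz, hxz⟩
    exact ⟨(x, z), hxz, (0, y - z), ⟨rfl, by linarith [hz.2], by linarith [hz.1]⟩, by simp⟩

lemma fst_mem_image_of_mem_verticalThickening {p : W × ℝ} (hp : p ∈ verticalThickening Z) :
    p.1 ∈ Prod.fst '' Z :=
  let ⟨_, _, hz⟩ := mk_mem_verticalThickening_iff.1 hp
  ⟨_, hz, rfl⟩

lemma zonotope_eq_verticalThickening [Module ℝ W] {n : ℕ} (u : Fin (n + 1) → W × ℝ)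
    (hlast : u (Fin.last n) = (0, 1)) :
    zonotope u = verticalThickening (zonotope fun j : Fin n => u j.castSucc) := by
  rw [zonotope_succ, hlast, verticalThickening]
  congr 1
  ext ⟨x, y⟩
  simp [eq_comm, and_comm]

variable [TopologicalSpace W]

lemma isCompact_verticalThickening [IsTopologicalAddGroup W] (hZ : IsCompact Z) :
    IsCompact (verticalThickening Z) :=
  hZ.add (isCompact_singleton.prod isCompact_Icc)

lemma lowerSlab_subset_verticalThickening [T2Space W] (hZ : IsCompact Z) :
    lowerSlab Z ⊆ verticalThickening Z := by
  rintro ⟨x, y⟩ ⟨hx, h₁, h₂⟩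
  exact mk_mem_verticalThickening_iff.2
    ⟨_, ⟨by linarith, by linarith⟩, mk_lowerBoundary_mem hZ hx⟩

end Thickening

section CentralDiff

variable {V : Type*} [AddCommGroup V] [Module ℝ V]

def centralDiff (e : V) (h : V → ℂ) (v : V) : ℂ :=
  (2 * I)⁻¹ * (h (v + (1/2 : ℝ) • e) - h (v - (1/2 : ℝ) • e))

def stairSum (e : V) (f : V → ℂ) (N : ℕ) (v : V) : ℂ :=
  -(2 * I) * ∑ k ∈ Finset.range (N + 1), f (v + ((k : ℝ) + 1/2) • e)

lemma centralDiff_stairSum (e : V) (f : V → ℂ) (N : ℕ) (v : V) :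
    centralDiff e (stairSum e f N) v = f v - f (v + ((N : ℝ) + 1) • e) := by
  have hup (k : ℕ) : v + (1/2 : ℝ) • e + ((k : ℝ) + 1/2) • e = v + ((k : ℝ) + 1) • e := by
    rw [add_assoc, ← add_smul]
    ring_nf
  have hdown (k : ℕ) : v - (1/2 : ℝ) • e + ((k : ℝ) + 1/2) • e = v + (k : ℝ) • e := by
    rw [sub_add_eq_add_sub, add_sub_assoc, ← sub_smul]
    ring_nf
  have htel := Finset.sum_range_sub (fun k : ℕ => f (v + (k : ℝ) • e)) (N + 1)
  push_cast at htel
  rw [Finset.sum_sub_distrib, zero_smul, add_zero] at htel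
  simp only [centralDiff, stairSum, hup, hdown]
  rw [← mul_sub, htel, ← mul_assoc, inv_mul_eq_div, neg_div, div_self (by simp), neg_one_mul,
    neg_sub]

variable [MeasurableSpace V] [MeasurableAdd V] {μ : Measure V} [μ.IsAddRightInvariant]
  {p : ENNReal} {h : V → ℂ}

lemma MeasureTheory.MemLp.centralDiff (hh : MemLp h p μ) (e : V) :
    MemLp (centralDiff e h) p μ :=
  ((hh.comp_measurePreserving (measurePreserving_add_right μ _)).sub
    (hh.comp_measurePreserving (measurePreserving_sub_right μ _))).const_mul _

lemma MeasureTheory.Integrable.centralDiff (hh : Integrable h μ) (e : V) :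
    Integrable (centralDiff e h) μ :=
  ((hh.comp_add_right _).sub (hh.comp_sub_right _)).const_mul _

lemma MeasureTheory.MemLp.stairSum {f : V → ℂ} (hf : MemLp f p μ) (e : V) (N : ℕ) :
    MemLp (stairSum e f N) p μ :=
  (memLp_finsetSum _ fun _ _ =>
    hf.comp_measurePreserving (measurePreserving_add_right μ _)).const_mul _

lemma fourierChar_half_sub_fourierChar_neg_half (x : ℝ) :
    (2 * I)⁻¹ * ((𝐞 (x / 2) : ℂ) - 𝐞 (-(x / 2))) = Real.sin (Real.pi * x) := by
  rw [Real.fourierChar_apply, Real.fourierChar_apply, ofReal_sin, Complex.sin]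
  push_cast
  field_simp
  ring_nf
  rw [I_sq]
  ring

variable [TopologicalSpace V] [BorelSpace V] {W : Type*} [AddCommGroup W] [Module ℝ W]
  [TopologicalSpace W] {L : V →ₗ[ℝ] W →ₗ[ℝ] ℝ}

lemma fourierIntegral_centralDiff (hL : Continuous fun p : V × W => L p.1 p.2)
    (hh : Integrable h μ) (e : V) (w : W) :
    fourierIntegral 𝐞 μ L (centralDiff e h) w =
      fourierIntegral 𝐞 μ L h w * Real.sin (Real.pi * L e w) := by
  have hconv (v₀ : V) : Integrable (fun v => (𝐞 (-L v w) : ℂ) * h (v + v₀)) μ := by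
    simpa only [Circle.smul_def, smul_eq_mul] using
      (fourierIntegral_convergent_iff Real.continuous_fourierChar hL w).2 (hh.comp_add_right v₀)
  have hshift (v₀ : V) : ∫ v, (𝐞 (-L v w) : ℂ) * h (v + v₀) ∂μ =
      𝐞 (L v₀ w) * fourierIntegral 𝐞 μ L h w := by
    simpa only [fourierIntegral, Function.comp_apply, Circle.smul_def, smul_eq_mul] using
      congrFun (fourierIntegral_comp_add_right 𝐞 μ L h v₀) w
  set c : V := (1/2 : ℝ) • e
  have hLc : L c w = L e w / 2 := by simp [c]; ring
  calc fourierIntegral 𝐞 μ L (centralDiff e h) w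
      = ∫ v, (2 * I)⁻¹ * ((𝐞 (-L v w) : ℂ) * h (v + c) - 𝐞 (-L v w) * h (v + -c)) ∂μ := by
        simp only [fourierIntegral, centralDiff, Circle.smul_def, smul_eq_mul, sub_eq_add_neg, c]
        congr 1 with v
        ring
    _ = (2 * I)⁻¹ * (𝐞 (L c w) * fourierIntegral 𝐞 μ L h w
          - 𝐞 (L (-c) w) * fourierIntegral 𝐞 μ L h w) := by
        rw [integral_const_mul, integral_sub (hconv c) (hconv (-c)), hshift, hshift]
    _ = fourierIntegral 𝐞 μ L h w * Real.sin (Real.pi * L e w) := by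
        rw [← fourierChar_half_sub_fourierChar_neg_half, map_neg, LinearMap.neg_apply, hLc]
        ring

lemma fourierIntegral_add_centralDiff (hL : Continuous fun p : V × W => L p.1 p.2)
    {g : V → ℂ} (hg : Integrable g μ) (hh : Integrable h μ) (e : V) (w : W) :
    fourierIntegral 𝐞 μ L (g + centralDiff e h) w =
      fourierIntegral 𝐞 μ L g w + fourierIntegral 𝐞 μ L h w * Real.sin (Real.pi * L e w) := by
  rw [fourierIntegral_add Real.continuous_fourierChar hL hg (hh.centralDiff e), Pi.add_apply,
    fourierIntegral_centralDiff hL hh]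

end CentralDiff

section Support

variable {W : Type*} [AddCommGroup W] [Module ℝ W]

/-- Above the slab, cutting the stair sum down to `Z` changes nothing (it vanishes above the fibre
of `Z` anyway), so the telescoping identity `centralDiff_stairSum` applies; below it, everything
vanishes. -/
lemma eq_centralDiff_indicator_stairSum {Z : Set (W × ℝ)} {f : W × ℝ → ℂ} {x : W} {a b : ℝ}
    {N : ℕ} (hZx : Prod.mk x ⁻¹' Z = Icc a b)
    (hf : ∀ y ∉ Icc (a - 1/2) (b + 1/2), f (x, y) = 0) (hN : b - a < N) {y : ℝ}
    (hy : y ∉ Icc (a - 1/2) (a + 1/2)) :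
    f (x, y) = centralDiff (0, 1) (Z.indicator (stairSum (0, 1) f N)) (x, y) := by
  have hadd (y s : ℝ) : (x, y) + s • ((0 : W), (1 : ℝ)) = (x, y + s) := by simp
  have hsub (y s : ℝ) : (x, y) - s • ((0 : W), (1 : ℝ)) = (x, y - s) := by simp
  have hmem (z : ℝ) : (x, z) ∈ Z ↔ z ∈ Icc a b := Set.ext_iff.1 hZx z
  have hstair (z : ℝ) (hz : b < z) : stairSum (0, 1) f N (x, z) = 0 := by
    simp only [stairSum, hadd]
    rw [Finset.sum_eq_zero fun k _ => hf _ fun h => by linarith [h.2, k.cast_nonneg (α := ℝ)],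
      mul_zero]
  rw [mem_Icc, not_and_or, not_le, not_le] at hy
  rcases hy with hy | hy
  · have hout (z : ℝ) (hz : z < a) : Z.indicator (stairSum (0, 1) f N) (x, z) = 0 :=
      indicator_of_notMem (fun h => by linarith [((hmem z).1 h).1]) _
    simp only [centralDiff, hadd, hsub, hout _ (by linarith : y + 1/2 < a),
      hout _ (by linarith : y - 1/2 < a), hf y fun h => by linarith [h.1], sub_zero, mul_zero]
  · have hind (z : ℝ) (hz : a ≤ z) :
        Z.indicator (stairSum (0, 1) f N) (x, z) = stairSum (0, 1) f N (x, z) := by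
      by_cases hzb : z ≤ b
      · exact indicator_of_mem ((hmem z).2 ⟨hz, hzb⟩) _
      · rw [indicator_of_notMem (fun h => hzb ((hmem z).1 h).2), hstair z (not_le.1 hzb)]
    calc f (x, y) = f (x, y) - f ((x, y) + ((N : ℝ) + 1) • ((0 : W), (1 : ℝ))) := by
          rw [hadd, hf (y + (N + 1)) fun h => by linarith [h.2], sub_zero]
      _ = centralDiff (0, 1) (stairSum (0, 1) f N) (x, y) := (centralDiff_stairSum _ _ _ _).symm
      _ = _ := by simp only [centralDiff, hadd, hsub, hind _ (by linarith : a ≤ y + 1/2),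
          hind _ (by linarith : a ≤ y - 1/2)]

variable {Z : Set (W × ℝ)}

lemma centralDiff_eq_zero_of_notMem_verticalThickening {h : W × ℝ → ℂ}
    (h0 : ∀ q ∉ Z, h q = 0) {p : W × ℝ} (hp : p ∉ verticalThickening Z) :
    centralDiff (0, 1) h p = 0 := by
  obtain ⟨x, y⟩ := p
  have h₁ : h ((x, y) + (1/2 : ℝ) • (0, 1)) = 0 := h0 _ fun hZ => hp
    (mk_mem_verticalThickening_iff.2 ⟨y + 1/2, ⟨by linarith, by linarith⟩, by simpa using hZ⟩)
  have h₂ : h ((x, y) - (1/2 : ℝ) • (0, 1)) = 0 := h0 _ fun hZ => hp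
    (mk_mem_verticalThickening_iff.2 ⟨y - 1/2, ⟨by linarith, by linarith⟩, by simpa using hZ⟩)
  simp only [centralDiff, h₁, h₂, sub_self, mul_zero]

variable [TopologicalSpace W] [T2Space W]

lemma eq_centralDiff_of_notMem_lowerSlab (hZ : IsCompact Z) (hZc : Convex ℝ Z) {N : ℕ}
    (hN : ∀ q ∈ Z, ∀ q' ∈ Z, q.2 - q'.2 < N) {f : W × ℝ → ℂ}
    (hf : ∀ p ∉ verticalThickening Z, f p = 0) {p : W × ℝ} (hp : p ∉ lowerSlab Z) :
    f p = centralDiff (0, 1) (Z.indicator (stairSum (0, 1) f N)) p := by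
  obtain ⟨x, y⟩ := p
  by_cases hx : x ∈ Prod.fst '' Z
  · have hZx := fiber_eq_Icc hZ hZc hx
    refine eq_centralDiff_indicator_stairSum hZx (fun y' hy' => hf _ fun h => hy' ?_)
      (hN _ ((isCompact_fiber hZ x).sSup_mem (fiber_nonempty hx)) _ (mk_lowerBoundary_mem hZ hx))
      fun hy => hp ⟨hx, hy⟩
    obtain ⟨z, hz, hxz⟩ := mk_mem_verticalThickening_iff.1 h
    have hz' : z ∈ Prod.mk x ⁻¹' Z := hxz
    rw [hZx] at hz'
    exact ⟨by linarith [hz.2, hz'.1], by linarith [hz.1, hz'.2]⟩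
  · have hout : (x, y) ∉ verticalThickening Z := fun h =>
      hx (fst_mem_image_of_mem_verticalThickening h)
    rw [hf _ hout, centralDiff_eq_zero_of_notMem_verticalThickening
      (fun q hq => indicator_of_notMem hq _) hout]

end Support

section PaleyWiener

variable {W : Type*} [NormedAddCommGroup W] [InnerProductSpace ℝ W]

def prodInner (W : Type*) [NormedAddCommGroup W] [InnerProductSpace ℝ W] :
    W × ℝ →ₗ[ℝ] W × ℝ →ₗ[ℝ] ℝ :=
  (innerₗ W).compl₁₂ (LinearMap.fst ℝ W ℝ) (LinearMap.fst ℝ W ℝ) +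
    (LinearMap.mul ℝ ℝ).compl₁₂ (LinearMap.snd ℝ W ℝ) (LinearMap.snd ℝ W ℝ)

lemma prodInner_apply (p q : W × ℝ) : prodInner W p q = ⟪p.1, q.1⟫ + p.2 * q.2 := rfl

lemma continuous_prodInner :
    Continuous fun pq : (W × ℝ) × (W × ℝ) => prodInner W pq.1 pq.2 := by
  simp only [prodInner_apply]
  fun_prop

variable {m : ℕ}

-- instance search does not see through `volume = volume.prod volume` on a product
instance : (volume : Measure (EuclideanSpace ℝ (Fin m) × ℝ)).IsAddRightInvariant := by
  rw [Measure.volume_eq_prod]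
  infer_instance

lemma mul_PW_kernel_eq_fourierChar_smul (f : EuclideanSpace ℝ (Fin m) × ℝ → ℂ)
    (t p : EuclideanSpace ℝ (Fin m) × ℝ) :
    f p * Complex.exp (-(2 * Real.pi * Complex.I * (((⟪ t.1, p.1 ⟫ : ℝ) + t.2 * p.2 : ℝ) : ℂ))) =
      𝐞 (-prodInner _ p t) • f p := by
  rw [Circle.smul_def, Real.fourierChar_apply, prodInner_apply, real_inner_comm, mul_comm p.2,
    smul_eq_mul, mul_comm]
  congr 2
  push_cast
  ring

lemma mem_PWprod_iff {Ω : Set (EuclideanSpace ℝ (Fin m) × ℝ)} (hΩ : MeasurableSet Ω)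
    {F : EuclideanSpace ℝ (Fin m) × ℝ → ℂ} :
    F ∈ PWprod Ω ↔ ∃ f, MemLp f 2 volume ∧ (∀ p ∉ Ω, f p = 0) ∧
      F = fourierIntegral 𝐞 volume (prodInner _) f := by
  simp only [PWprod, mem_ofPred_eq, mul_PW_kernel_eq_fourierChar_smul]
  constructor
  · rintro ⟨f, hf, hF⟩
    refine ⟨Ω.indicator f, (memLp_indicator_iff_restrict hΩ).2 hf,
      fun p hp => indicator_of_notMem hp f, funext fun t => ?_⟩
    rw [hF, fourierIntegral, ← integral_indicator hΩ]
    congr 1 with p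
    by_cases hp : p ∈ Ω <;> simp [hp]
  · rintro ⟨f, hf, hf0, rfl⟩
    refine ⟨f, hf.restrict Ω, fun t => ?_⟩
    rw [fourierIntegral,
      setIntegral_eq_integral_of_forall_compl_eq_zero fun p hp => by simp [hf0 p hp]]

end PaleyWiener

lemma MeasureTheory.MemLp.integrable_of_forall_compl_eq_zero {α E : Type*} [MeasurableSpace α]
    {μ : Measure α} [NormedAddCommGroup E] {f : α → E} {s : Set α} {p : ENNReal}
    (hp : 1 ≤ p) (hs : μ s ≠ ⊤) (hf : MemLp f p μ) (h0 : ∀ x ∉ s, f x = 0) :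
    Integrable f μ := by
  have := isFiniteMeasure_restrict.2 hs
  exact (integrableOn_iff_integrable_of_support_subset
    (Function.support_subset_iff'.2 h0)).1 ((hf.restrict s).integrable hp)

section Decomposition

variable {m : ℕ} {Z : Set (EuclideanSpace ℝ (Fin m) × ℝ)}

lemma isCylindric_lowerSlab (hZ : IsCompact Z) : IsCylindric (lowerSlab Z) (Prod.fst '' Z) := by
  obtain ⟨C, hC⟩ := exists_forall_abs_snd_le hZ
  have hB := hZ.image continuous_fst
  refine ⟨(isCompact_verticalThickening hZ).isBounded.subset
    (lowerSlab_subset_verticalThickening hZ), measurableSet_lowerSlab hZ, hB.isBounded,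
    hB.isClosed.measurableSet, fun x => lowerBoundary Z x - 1/2,
    (measurable_lowerBoundary hZ).sub_const _, ⟨C + 1/2, fun x hx => ?_⟩, ?_⟩
  · have := abs_le.1 (hC _ (mk_lowerBoundary_mem hZ hx))
    exact abs_le.2 ⟨by linarith [this.1], by linarith [this.2]⟩
  · simp only [lowerSlab, show ∀ r : ℝ, r - 1/2 + 1 = r + 1/2 from fun r => by ring]

theorem exists_PWprod_decomposition (hZ : IsCompact Z) (hZc : Convex ℝ Z)
    {F : EuclideanSpace ℝ (Fin m) × ℝ → ℂ} (hF : F ∈ PWprod (verticalThickening Z)) :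
    ∃ G ∈ PWprod (lowerSlab Z), ∃ H ∈ PWprod Z, ∀ p,
      F p = G p + H p * ((Real.sin (Real.pi * p.2) : ℝ) : ℂ) := by
  have hΩ := isCompact_verticalThickening hZ
  obtain ⟨f, hf, hf0, rfl⟩ := (mem_PWprod_iff hΩ.measurableSet).1 hF
  obtain ⟨C, hC⟩ := exists_forall_abs_snd_le hZ
  obtain ⟨N, hN⟩ := exists_nat_gt (2 * C)
  set h := Z.indicator (stairSum (0, 1) f N)
  have hh : MemLp h 2 volume := (hf.stairSum _ N).indicator hZ.measurableSet
  have hh0 : ∀ p ∉ Z, h p = 0 := fun p hp => indicator_of_notMem hp _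
  have hg0 : ∀ p ∉ lowerSlab Z, (f - centralDiff (0, 1) h) p = 0 := fun p hp =>
    sub_eq_zero.2 (eq_centralDiff_of_notMem_lowerSlab hZ hZc (fun q hq q' hq' => by
      linarith [abs_le.1 (hC q hq), abs_le.1 (hC q' hq')]) hf0 hp)
  refine ⟨_, (mem_PWprod_iff (measurableSet_lowerSlab hZ)).2
    ⟨_, hf.sub (hh.centralDiff _), hg0, rfl⟩, _, (mem_PWprod_iff hZ.measurableSet).2
    ⟨h, hh, hh0, rfl⟩, fun t => ?_⟩
  have hfi := hf.integrable_of_forall_compl_eq_zero one_le_two hΩ.measure_lt_top.ne hf0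
  have hhi := hh.integrable_of_forall_compl_eq_zero one_le_two hZ.measure_lt_top.ne hh0
  simpa [prodInner_apply] using fourierIntegral_add_centralDiff continuous_prodInner
    (hfi.sub (hhi.centralDiff (0, 1))) hhi (0, 1) t

theorem add_mul_sin_mem_PWprod (hZ : IsCompact Z) {G H : EuclideanSpace ℝ (Fin m) × ℝ → ℂ}
    (hG : G ∈ PWprod (lowerSlab Z)) (hH : H ∈ PWprod Z) :
    (fun p => G p + H p * ((Real.sin (Real.pi * p.2) : ℝ) : ℂ)) ∈
      PWprod (verticalThickening Z) := by
  have hΩ := isCompact_verticalThickening hZ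
  have hS := lowerSlab_subset_verticalThickening hZ
  obtain ⟨g, hg, hg0, rfl⟩ := (mem_PWprod_iff (measurableSet_lowerSlab hZ)).1 hG
  obtain ⟨h, hh, hh0, rfl⟩ := (mem_PWprod_iff hZ.measurableSet).1 hH
  have hgi := hg.integrable_of_forall_compl_eq_zero one_le_two
    ((measure_mono hS).trans_lt hΩ.measure_lt_top).ne hg0
  have hhi := hh.integrable_of_forall_compl_eq_zero one_le_two hZ.measure_lt_top.ne hh0
  refine (mem_PWprod_iff hΩ.measurableSet).2
    ⟨g + centralDiff (0, 1) h, hg.add (hh.centralDiff _), fun p hp => ?_, funext fun t => ?_⟩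
  · rw [Pi.add_apply, hg0 p fun h => hp (hS h),
      centralDiff_eq_zero_of_notMem_verticalThickening hh0 hp, add_zero]
  · simpa [prodInner_apply] using
      (fourierIntegral_add_centralDiff continuous_prodInner hgi hhi (0, 1) t).symm

end Decomposition

theorem decomposition_PW_zonotope_general
    (m n : ℕ) (u : Fin (n + 1) → EuclideanSpace ℝ (Fin m) × ℝ)
    (hspan : Submodule.span ℝ (Set.range (fun j : Fin n => u j.castSucc)) = ⊤)
    (hlast : u (Fin.last n) = (0, 1)) :
    ∃ (S : Set (EuclideanSpace ℝ (Fin m) × ℝ)) (B : Set (EuclideanSpace ℝ (Fin m))),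
      IsCylindric S B ∧ IsZonotope B ∧ (interior B).Nonempty ∧
      (∀ F ∈ PWprod (zonotope u), ∃ G ∈ PWprod S,
        ∃ H ∈ PWprod (zonotope (fun j : Fin n => u j.castSucc)),
        ∀ p : EuclideanSpace ℝ (Fin m) × ℝ,
          F p = G p + H p * ((Real.sin (Real.pi * p.2) : ℝ) : ℂ)) ∧
      (∀ G ∈ PWprod S, ∀ H ∈ PWprod (zonotope (fun j : Fin n => u j.castSucc)),
        (fun p : EuclideanSpace ℝ (Fin m) × ℝ =>
          G p + H p * ((Real.sin (Real.pi * p.2) : ℝ) : ℂ)) ∈ PWprod (zonotope u)) := by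
  set Z := zonotope fun j : Fin n => u j.castSucc
  have hZ : IsCompact Z := isCompact_zonotope _
  have hB : Prod.fst '' Z =
      zonotope (LinearMap.fst ℝ (EuclideanSpace ℝ (Fin m)) ℝ ∘ fun j : Fin n => u j.castSucc) :=
    image_zonotope (LinearMap.fst ℝ (EuclideanSpace ℝ (Fin m)) ℝ) _
  rw [zonotope_eq_verticalThickening u hlast]
  refine ⟨lowerSlab Z, Prod.fst '' Z, isCylindric_lowerSlab hZ, hB ▸ isZonotope_zonotope _,
    hB ▸ interior_zonotope_nonempty (span_range_comp_eq_top LinearMap.fst_surjective hspan),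
    fun F hF => exists_PWprod_decomposition hZ (convex_zonotope _) hF,
    fun G hG H hH => add_mul_sin_mem_PWprod hZ hG hH⟩

theorem decomposition_PW_zonotope
    (m n : ℕ) (hm : 1 ≤ m) (u : Fin (n + 1) → EuclideanSpace ℝ (Fin m) × ℝ)
    (hspan : Submodule.span ℝ (Set.range (fun j : Fin n => u j.castSucc)) = ⊤)
    (hlast : u (Fin.last n) = (0, 1)) :
    ∃ (S : Set (EuclideanSpace ℝ (Fin m) × ℝ)) (B : Set (EuclideanSpace ℝ (Fin m))),
      IsCylindric S B ∧ IsZonotope B ∧ (interior B).Nonempty ∧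
      (∀ F ∈ PWprod (zonotope u), ∃ G ∈ PWprod S,
        ∃ H ∈ PWprod (zonotope (fun j : Fin n => u j.castSucc)),
        ∀ p : EuclideanSpace ℝ (Fin m) × ℝ,
          F p = G p + H p * ((Real.sin (Real.pi * p.2) : ℝ) : ℂ)) ∧
      (∀ G ∈ PWprod S, ∀ H ∈ PWprod (zonotope (fun j : Fin n => u j.castSucc)),
        (fun p : EuclideanSpace ℝ (Fin m) × ℝ =>
          G p + H p * ((Real.sin (Real.pi * p.2) : ℝ) : ℂ)) ∈ PWprod (zonotope u)) :=
  decomposition_PW_zonotope_general m n u hspan hlast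
end
end

section
/- Let H be a separable complex Hilbert space and let (f_n)_{n ∈ ℕ} be a sequence in H. Then (f_n) is a Riesz basis of H (i.e., the image of an orthonormal basis of H under a bounded invertible linear operator on H) if and only if the following three conditions hold: (i) (f_n) is a complete system in H, i.e., its finite linear span is dense in H; (ii) for every f ∈ H, ∑_n |⟨f, f_n⟩|² < ∞; (iii) for every sequence of scalars (c_n) with ∑_n |c_n|² < ∞, there exists at least one f ∈ H satisfying ⟨f, f_n⟩ = c_n for all n. -/
/-!
Both sides say that the analysis operator `g ↦ (⟪f n, g⟫)ₙ` is a topological isomorphism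
`U : H ≃L ℓ²`. If `f = T ∘ e` then `U = e.repr ∘ T*`. Conversely, conditions (ii) and (iii)
say that `U` is well defined and onto, (i) says that it is injective, and it is bounded by the
closed graph theorem; then `U*` maps the standard basis of `ℓ²` to `f`, so `f` is the image
of any Hilbert basis `e` of `H` indexed by `ℕ` under `U* ∘ e.repr`. Such an `e` exists because
`H` is separable (an orthonormal family is `√2`-separated, hence countable) and, being
isomorphic to `ℓ²`, infinite-dimensional.
-/

open MeasureTheory Complex
open scoped RealInnerProductSpace Pointwise

noncomputable section

/-- A family of vectors in a Hilbert space is a *Riesz basis* if it is the image of an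
orthonormal (Hilbert) basis under a bounded invertible linear operator. -/
def IsRieszBasis {H : Type*} [NormedAddCommGroup H] [InnerProductSpace ℂ H] {ι : Type*}
    (f : ι → H) : Prop :=
  ∃ (e : HilbertBasis ι ℂ H) (T : H ≃L[ℂ] H), ∀ i, f i = T (e i)

open scoped InnerProductSpace InnerProduct ENNReal lp
open Filter Topology

theorem memℓp_two_iff_summable_sq {ι : Type*} {E : ι → Type*} [∀ i, NormedAddCommGroup (E i)]
    {c : ∀ i, E i} : Memℓp c 2 ↔ Summable fun i => ‖c i‖ ^ 2 := by
  simp [memℓp_gen_iff (p := 2) (by norm_num)]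

theorem exists_continuousLinearMap_lp_of_memℓp {ι 𝕜 E F : Type*} [NontriviallyNormedField 𝕜]
    [NormedAddCommGroup E] [NormedSpace 𝕜 E] [CompleteSpace E]
    [NormedAddCommGroup F] [NormedSpace 𝕜 F] [CompleteSpace F] {p : ℝ≥0∞} [Fact (1 ≤ p)]
    (φ : ι → E →L[𝕜] F) (hφ : ∀ x, Memℓp (fun i => φ i x) p) :
    ∃ A : E →L[𝕜] lp (fun _ : ι => F) p, ∀ x i, A x i = φ i x := by
  let A : E →ₗ[𝕜] lp (fun _ : ι => F) p :=
    { toFun := fun x => ⟨fun i => φ i x, hφ x⟩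
      map_add' := fun x y => lp.ext <| funext fun i => map_add (φ i) x y
      map_smul' := fun c x => lp.ext <| funext fun i => map_smul (φ i) c x }
  refine ⟨⟨A, A.continuous_of_seq_closed_graph fun u x y hu hAu => ?_⟩, fun _ _ => rfl⟩
  have hy : Tendsto (fun k => ⇑(A (u k))) atTop (𝓝 ⇑y) :=
    (lp.uniformContinuous_coe.continuous.tendsto y).comp hAu
  have hAx : Tendsto (fun k => ⇑(A (u k))) atTop (𝓝 ⇑(A x)) :=
    tendsto_pi_nhds.2 fun i => ((φ i).continuous.tendsto x).comp hu
  exact lp.ext (tendsto_nhds_unique hy hAx)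

namespace ContinuousLinearEquiv

variable {𝕜 E F : Type*} [RCLike 𝕜] [NormedAddCommGroup E] [InnerProductSpace 𝕜 E]
  [CompleteSpace E] [NormedAddCommGroup F] [InnerProductSpace 𝕜 F] [CompleteSpace F]

def adjoint (U : E ≃L[𝕜] F) : F ≃L[𝕜] E :=
  equivOfInverse ((U : E →L[𝕜] F)†) ((U.symm : F →L[𝕜] E)†)
    (fun x => by
      rw [← ContinuousLinearMap.comp_apply, ← ContinuousLinearMap.adjoint_comp,
        coe_comp_coe_symm, ContinuousLinearMap.adjoint_id, ContinuousLinearMap.id_apply])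
    (fun x => by
      rw [← ContinuousLinearMap.comp_apply, ← ContinuousLinearMap.adjoint_comp,
        coe_symm_comp_coe, ContinuousLinearMap.adjoint_id, ContinuousLinearMap.id_apply])

theorem adjoint_apply (U : E ≃L[𝕜] F) (y : F) : U.adjoint y = ((U : E →L[𝕜] F)†) y := rfl

end ContinuousLinearEquiv

section Hilbert

variable {𝕜 E ι : Type*} [RCLike 𝕜] [NormedAddCommGroup E] [InnerProductSpace 𝕜 E]

theorem Orthonormal.countable [TopologicalSpace.SeparableSpace E] {v : ι → E}
    (hv : Orthonormal 𝕜 v) : Countable ι := by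
  refine Pairwise.countable_of_isOpen_disjoint (s := fun i => Metric.ball (v i) 2⁻¹)
    (fun i j hij => Metric.ball_disjoint_ball ?_) (fun _ => Metric.isOpen_ball)
    (fun _ => Metric.nonempty_ball.2 (by norm_num))
  have h : ‖v i - v j‖ ^ 2 = 2 := by
    rw [@norm_sub_sq 𝕜, hv.1 i, hv.1 j, hv.2 hij]
    norm_num
  rw [dist_eq_norm]
  nlinarith [norm_nonneg (v i - v j)]

theorem HilbertBasis.finiteDimensional_iff_finite [CompleteSpace E] (b : HilbertBasis ι 𝕜 E) :
    FiniteDimensional 𝕜 E ↔ Finite ι := by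
  refine ⟨fun _ => ?_, fun _ => ?_⟩
  · by_contra h
    have := not_finite_iff_infinite.1 h
    exact Module.Finite.not_linearIndependent_of_infinite _ b.orthonormal.linearIndependent
  · have := Fintype.ofFinite ι
    exact b.toOrthonormalBasis.toBasis.finiteDimensional_of_finite

theorem exists_hilbertBasis_nat [CompleteSpace E] [TopologicalSpace.SeparableSpace E]
    (h : ¬ FiniteDimensional 𝕜 E) : Nonempty (HilbertBasis ℕ 𝕜 E) := by
  obtain ⟨w, b, -⟩ := exists_hilbertBasis 𝕜 E
  have : Countable w := b.orthonormal.countable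
  have : Infinite w := not_finite_iff_infinite.1 (mt b.finiteDimensional_iff_finite.2 h)
  obtain ⟨σ⟩ := nonempty_equiv_of_countable (α := ℕ) (β := w)
  refine ⟨HilbertBasis.mk (b.orthonormal.comp σ σ.injective) ?_⟩
  rw [Set.range_comp, σ.range_eq_univ, Set.image_univ, b.dense_span]

theorem dense_span_range_iff [CompleteSpace E] (f : ι → E) :
    Dense (Submodule.span 𝕜 (Set.range f) : Set E) ↔ ∀ g, (∀ i, ⟪f i, g⟫_𝕜 = 0) → g = 0 := by
  rw [Submodule.dense_iff_topologicalClosure_eq_top, Submodule.topologicalClosure_eq_top_iff,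
    Submodule.eq_bot_iff]
  refine forall_congr' fun g => imp_congr_left ⟨fun hg i => ?_, fun hg => ?_⟩
  · exact Submodule.inner_right_of_mem_orthogonal
      (Submodule.subset_span (Set.mem_range_self i)) hg
  · have hK : Submodule.span 𝕜 (Set.range f) ⟂ Submodule.span 𝕜 {g} :=
      Submodule.isOrtho_span.2 (by rintro _ ⟨i, rfl⟩ _ rfl; exact hg i)
    exact hK.symm (Submodule.mem_span_singleton_self g)

theorem exists_equiv_ell2_apply_eq_inner_iff [CompleteSpace E] (f : ι → E) :
    (∃ U : E ≃L[𝕜] ℓ²(ι, 𝕜), ∀ g i, U g i = ⟪f i, g⟫_𝕜) ↔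
      Dense (Submodule.span 𝕜 (Set.range f) : Set E) ∧
      (∀ g : E, Summable fun i => ‖⟪g, f i⟫_𝕜‖ ^ 2) ∧
      ∀ c : ι → 𝕜, Summable (fun i => ‖c i‖ ^ 2) → ∃ g : E, ∀ i, ⟪f i, g⟫_𝕜 = c i := by
  constructor
  · rintro ⟨U, hU⟩
    refine ⟨(dense_span_range_iff f).2 fun g hg => ?_, fun g => ?_, fun c hc => ?_⟩
    · exact U.map_eq_zero_iff.1 (lp.ext <| funext fun i => (hU g i).trans (hg i))
    · simpa only [hU, norm_inner_symm] using memℓp_two_iff_summable_sq.1 (U g).2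
    · refine ⟨U.symm ⟨c, memℓp_two_iff_summable_sq.2 hc⟩, fun i => ?_⟩
      rw [← hU, U.apply_symm_apply]
  · rintro ⟨hdense, hsum, hmoment⟩
    obtain ⟨A, hA⟩ := exists_continuousLinearMap_lp_of_memℓp (fun i => innerSL 𝕜 (f i))
      fun g => memℓp_two_iff_summable_sq.2 <| by
        simpa only [innerSL_apply_apply, norm_inner_symm] using hsum g
    have hinj : Function.Injective A := (injective_iff_map_eq_zero A).2 fun g hg =>
      (dense_span_range_iff f).1 hdense g fun i => by rw [← innerSL_apply_apply, ← hA, hg]; rfl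
    have hsurj : Function.Surjective A := fun c => by
      obtain ⟨g, hg⟩ := hmoment c (memℓp_two_iff_summable_sq.1 c.2)
      exact ⟨g, lp.ext <| funext fun i => (hA g i).trans (hg i)⟩
    exact ⟨.ofBijective A (LinearMap.ker_eq_bot.2 hinj) (LinearMap.range_eq_top.2 hsurj), hA⟩

end Hilbert

theorem IsRieszBasis.exists_equiv_ell2_apply_eq_inner {H ι : Type*} [NormedAddCommGroup H]
    [InnerProductSpace ℂ H] [CompleteSpace H] {f : ι → H} (hf : IsRieszBasis f) :
    ∃ U : H ≃L[ℂ] ℓ²(ι, ℂ), ∀ g i, U g i = ⟪f i, g⟫_ℂ := by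
  obtain ⟨e, T, hfT⟩ := hf
  refine ⟨T.adjoint.trans e.repr.toContinuousLinearEquiv, fun g i => ?_⟩
  rw [ContinuousLinearEquiv.trans_apply, LinearIsometryEquiv.coe_toContinuousLinearEquiv,
    e.repr_apply_apply, T.adjoint_apply, ContinuousLinearMap.adjoint_inner_right, hfT]
  rfl

theorem isRieszBasis_of_equiv_ell2_apply_eq_inner {H : Type*} [NormedAddCommGroup H]
    [InnerProductSpace ℂ H] [CompleteSpace H] [TopologicalSpace.SeparableSpace H] {f : ℕ → H}
    (U : H ≃L[ℂ] ℓ²(ℕ, ℂ)) (hU : ∀ g n, U g n = ⟪f n, g⟫_ℂ) : IsRieszBasis f := by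
  have hH : ¬ FiniteDimensional ℂ H := fun _ =>
    have := (default : HilbertBasis ℕ ℂ ℓ²(ℕ, ℂ)).finiteDimensional_iff_finite.1
      U.toLinearEquiv.finiteDimensional
    not_finite ℕ
  obtain ⟨e⟩ := exists_hilbertBasis_nat hH
  refine ⟨e, e.repr.toContinuousLinearEquiv.trans U.adjoint,
    fun n => ext_inner_right ℂ fun v => ?_⟩
  rw [ContinuousLinearEquiv.trans_apply, LinearIsometryEquiv.coe_toContinuousLinearEquiv,
    e.repr_self, U.adjoint_apply, ContinuousLinearMap.adjoint_inner_left, lp.inner_single_left]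
  simp [hU]

theorem riesz_basis_characterization
    {H : Type*} [NormedAddCommGroup H] [InnerProductSpace ℂ H] [CompleteSpace H]
    [TopologicalSpace.SeparableSpace H] (f : ℕ → H) :
    IsRieszBasis f ↔
      (Dense (Submodule.span ℂ (Set.range f) : Set H) ∧
       (∀ g : H, Summable (fun n => ‖(inner ℂ g (f n) : ℂ)‖ ^ 2)) ∧
       (∀ c : ℕ → ℂ, Summable (fun n => ‖c n‖ ^ 2) →
          ∃ g : H, ∀ n, (inner ℂ (f n) g : ℂ) = c n)) := by
  rw [← exists_equiv_ell2_apply_eq_inner_iff]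
  exact ⟨IsRieszBasis.exists_equiv_ell2_apply_eq_inner,
    fun ⟨U, hU⟩ => isRieszBasis_of_equiv_ell2_apply_eq_inner U hU⟩
end
end
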